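/- Let F be a cumulative distribution function on ℝ supported on [a,b], a < b, a,b ∈ ℝ, with mean μ. Then for every p ∈ (0,1) and every n ∈ ℕ, nμ ≤ inf_{S∈𝔖_n} TVaR_p(S) ≤ nμ + (b − a). -/

import Mathlib

open MeasureTheory ProbabilityTheory Set Filter Topology Asymptotics

noncomputable section

/-- Generalized inverse `F⁻¹` of the CDF of the distribution `ν`:
`F⁻¹(t) = inf {x | F(x) ≥ t}` for `t ≠ 0` and `F⁻¹(0) = inf {x | F(x) > 0}`. -/
def qf (ν : Measure ℝ) (t : ℝ) : ℝ :=
  if t = 0 then sInf {x : ℝ | 0 < (ν (Iic x)).toReal}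
  else sInf {x : ℝ | t ≤ (ν (Iic x)).toReal}

/-- Extended-real-valued generalized inverse of the CDF of `ν` (so that
`F⁻¹(1) = +∞` for unbounded upper support and `F⁻¹(0) = −∞` for unbounded
lower support). -/
def qfE (ν : Measure ℝ) (t : ℝ) : EReal :=
  if t = 0 then sInf ((fun x : ℝ => (x : EReal)) '' {x : ℝ | 0 < (ν (Iic x)).toReal})
  else sInf ((fun x : ℝ => (x : EReal)) '' {x : ℝ | t ≤ (ν (Iic x)).toReal})

/-- `μ_{p,q} = (q−p)⁻¹ ∫_p^q F⁻¹(t) dt` as an extended real number. -/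
def muPQ (ν : Measure ℝ) (p q : ℝ) : EReal :=
  (((q - p)⁻¹ : ℝ) : EReal) * ((∫⁻ t in Ioo p q, ENNReal.ofReal (qf ν t) : ENNReal) : EReal)
    - (((q - p)⁻¹ : ℝ) : EReal) * ((∫⁻ t in Ioo p q, ENNReal.ofReal (-(qf ν t)) : ENNReal) : EReal)

/-- `μ_{p,q} = (q−p)⁻¹ ∫_p^q F⁻¹(t) dt` as a real number (when it is finite). -/
def muR (ν : Measure ℝ) (p q : ℝ) : ℝ := (q - p)⁻¹ * ∫ t in Ioo p q, qf ν t

/-- Value-at-Risk of a random variable `X` at level `p`: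
`VaR_p(X) = inf {x | P(X ≤ x) ≥ p}`. -/
def VaR {Ω : Type*} [MeasurableSpace Ω] (P : Measure Ω) (X : Ω → ℝ) (p : ℝ) : ℝ :=
  sInf {x : ℝ | p ≤ (P {ω | X ω ≤ x}).toReal}

/-- Expected Shortfall / Tail-Value-at-Risk at level `p`:
`TVaR_p(X) = (1−p)⁻¹ ∫_p^1 VaR_α(X) dα` (real-valued). -/
def TVaR {Ω : Type*} [MeasurableSpace Ω] (P : Measure Ω) (X : Ω → ℝ) (p : ℝ) : ℝ :=
  (1 - p)⁻¹ * ∫ α in p..(1:ℝ), VaR P X α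

/-- Extended-real-valued Tail-Value-at-Risk at level `p`, allowing the value `+∞`. -/
def TVaRE {Ω : Type*} [MeasurableSpace Ω] (P : Measure Ω) (X : Ω → ℝ) (p : ℝ) : EReal :=
  (((1 - p)⁻¹ : ℝ) : EReal) * ((∫⁻ α in Ioo p 1, ENNReal.ofReal (VaR P X α) : ENNReal) : EReal)
    - (((1 - p)⁻¹ : ℝ) : EReal) * ((∫⁻ α in Ioo p 1, ENNReal.ofReal (-(VaR P X α)) : ENNReal) : EReal)

/-- The set of values `VaR_p(S)` for `S` in the admissible risk class
`𝔖_n(F,…,F) = {X₁ + ⋯ + X_n : X_i ∼ F}` (over all atomless probability spaces). -/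
def VaRvals (ν : Measure ℝ) (n : ℕ) (p : ℝ) : Set ℝ :=
  {r | ∃ (Ω : Type) (mΩ : MeasurableSpace Ω) (P : Measure Ω) (X : Fin n → Ω → ℝ),
    IsProbabilityMeasure P ∧ (∀ i, Measure.map (X i) P = ν) ∧
    r = VaR P (fun ω => ∑ i, X i ω) p}

/-- The set of values `TVaR_p(S)` for `S` in the admissible risk class
`𝔖_n(F,…,F) = {X₁ + ⋯ + X_n : X_i ∼ F}` (over all atomless probability spaces). -/
def TVaRvals (ν : Measure ℝ) (n : ℕ) (p : ℝ) : Set ℝ :=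
  {r | ∃ (Ω : Type) (mΩ : MeasurableSpace Ω) (P : Measure Ω) (X : Fin n → Ω → ℝ),
    IsProbabilityMeasure P ∧ (∀ i, Measure.map (X i) P = ν) ∧
    r = TVaR P (fun ω => ∑ i, X i ω) p}

end

/-!
For the lower bound, `TVaR_p(S)` is the average over `[p, 1]` of the (monotone) quantile function
of `S`, which dominates its average over `[0, 1]`, namely `E S = nμ`.

For the upper bound, let `Q` be the quantile function of `F` and `U` uniform on the circle `ℝ / ℤ`.
The variables `X_i = Q(U + i / n)` all have law `F`, and if `v ∈ [0, 1/n)` represents `U` modulo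
`1/n`, their sum is `∑_{k < n} Q(v + k/n)`. By monotonicity of `Q` two such sums differ by at most
`Q(1) - Q(0) ≤ b - a`, so `S` never exceeds its mean `nμ` by more than `b - a`, and neither does
`TVaR_p(S)`.
-/

/-- The left-continuous quantile function `t ↦ inf {x | t ≤ F(x)}` of `η`, floored at `c` and with
`t` capped at `1`, so that for `η` carried by `[c, d]` it is monotone on all of `ℝ`. -/
noncomputable def boundedQuantile (η : Measure ℝ) (c t : ℝ) : ℝ :=
  sInf {x | c ≤ x ∧ min t 1 ≤ cdf η x}

section Quantile

variable {η : Measure ℝ} [IsProbabilityMeasure η] {c d : ℝ}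

lemma cdf_eq_zero_of_lt (hη : η (Icc c d)ᶜ = 0) {x : ℝ} (hx : x < c) : cdf η x = 0 := by
  have hsub : Iic x ⊆ (Icc c d)ᶜ := fun _ hy hyI => (hy.trans_lt hx).not_ge hyI.1
  have : η (Iic x) = 0 := measure_mono_null hsub hη
  rw [cdf_eq_real, measureReal_def, this, ENNReal.toReal_zero]

lemma cdf_eq_one_of_le (hη : η (Icc c d)ᶜ = 0) {x : ℝ} (hx : d ≤ x) : cdf η x = 1 := by
  have : η (Iic x)ᶜ = 0 :=
    measure_mono_null (compl_subset_compl.2 fun y hy => hy.2.trans hx) hη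
  rw [cdf_eq_real, measureReal_def, (prob_compl_eq_zero_iff measurableSet_Iic).1 this,
    ENNReal.toReal_one]

lemma le_of_measure_compl_Icc_eq_zero (hη : η (Icc c d)ᶜ = 0) : c ≤ d := by
  by_contra hdc
  rw [Icc_eq_empty hdc, compl_empty, measure_univ] at hη
  exact one_ne_zero hη

lemma mem_boundedQuantile_set (hη : η (Icc c d)ᶜ = 0) (t : ℝ) :
    d ∈ {x | c ≤ x ∧ min t 1 ≤ cdf η x} :=
  ⟨le_of_measure_compl_Icc_eq_zero hη, by rw [cdf_eq_one_of_le hη le_rfl]; exact min_le_right _ _⟩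

lemma boundedQuantile_mem_Icc (hη : η (Icc c d)ᶜ = 0) (t : ℝ) :
    boundedQuantile η c t ∈ Icc c d :=
  ⟨le_csInf ⟨d, mem_boundedQuantile_set hη t⟩ fun _ hx => hx.1,
    csInf_le ⟨c, fun _ hx => hx.1⟩ (mem_boundedQuantile_set hη t)⟩

lemma monotone_boundedQuantile (hη : η (Icc c d)ᶜ = 0) : Monotone (boundedQuantile η c) :=
  fun _ _ hst => csInf_le_csInf ⟨c, fun _ hx => hx.1⟩ ⟨d, mem_boundedQuantile_set hη _⟩
    fun _ hx => ⟨hx.1, (min_le_min_right 1 hst).trans hx.2⟩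

lemma boundedQuantile_le_iff (hη : η (Icc c d)ᶜ = 0) {t : ℝ} (ht : t ∈ Ioc 0 1) (x : ℝ) :
    boundedQuantile η c t ≤ x ↔ t ≤ cdf η x := by
  have hmin : min t 1 = t := min_eq_left ht.2
  constructor
  · intro hx
    -- `cdf η` is right-continuous and exceeds `t` to the right of the infimum
    have hq : t ≤ cdf η (boundedQuantile η c t) := by
      refine ge_of_tendsto (((cdf η).right_continuous _).mono_left
        (nhdsWithin_mono _ Ioi_subset_Ici_self)) ?_
      filter_upwards [self_mem_nhdsWithin] with y hy
      obtain ⟨z, hz, hzy⟩ := exists_lt_of_csInf_lt ⟨d, mem_boundedQuantile_set hη t⟩ hy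
      exact hmin ▸ hz.2.trans (monotone_cdf η hzy.le)
    exact hq.trans (monotone_cdf η hx)
  · intro hx
    refine csInf_le ⟨c, fun _ hy => hy.1⟩ ⟨?_, hmin.symm ▸ hx⟩
    by_contra hxc
    rw [cdf_eq_zero_of_lt hη (not_le.1 hxc)] at hx
    exact ht.1.not_ge hx

lemma map_boundedQuantile (hη : η (Icc c d)ᶜ = 0) :
    (volume.restrict (Ioc 0 1)).map (boundedQuantile η c) = η := by
  have hQ := (monotone_boundedQuantile hη).measurable
  refine Measure.ext_of_Iic _ _ fun x => ?_
  have hpre : boundedQuantile η c ⁻¹' Iic x ∩ Ioc 0 1 = Ioc 0 (cdf η x) := by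
    ext t
    simp only [mem_inter_iff, mem_preimage, mem_Iic, mem_Ioc]
    constructor
    · rintro ⟨hQt, ht⟩
      exact ⟨ht.1, (boundedQuantile_le_iff hη ht x).1 hQt⟩
    · rintro ⟨ht0, htx⟩
      have ht : t ∈ Ioc 0 1 := ⟨ht0, htx.trans (cdf_le_one η x)⟩
      exact ⟨(boundedQuantile_le_iff hη ht x).2 htx, ht⟩
  rw [Measure.map_apply hQ measurableSet_Iic, Measure.restrict_apply (hQ measurableSet_Iic),
    hpre, Real.volume_Ioc, sub_zero, ofReal_cdf]

lemma integral_id_eq_intervalIntegral_boundedQuantile (hη : η (Icc c d)ᶜ = 0) :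
    ∫ x, x ∂η = ∫ t in 0..1, boundedQuantile η c t := by
  conv_lhs => rw [← map_boundedQuantile hη]
  rw [integral_map (f := fun x => x) (monotone_boundedQuantile hη).measurable.aemeasurable
    aestronglyMeasurable_id, intervalIntegral.integral_of_le zero_le_one]

end Quantile

lemma Monotone.mul_intervalIntegral_le_mul_intervalIntegral_of_le {Q : ℝ → ℝ} (hQ : Monotone Q)
    {a p b : ℝ} (hap : a ≤ p) (hpb : p ≤ b) :
    (b - p) * ∫ t in a..b, Q t ≤ (b - a) * ∫ t in p..b, Q t := by
  have hint : ∀ u v, IntervalIntegrable Q volume u v := fun u v => hQ.intervalIntegrable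
  have hleft : ∫ t in a..p, Q t ≤ (p - a) * Q p := by
    simpa using intervalIntegral.integral_mono_on hap (hint a p) intervalIntegrable_const
      fun t ht => hQ ht.2
  have hright : (b - p) * Q p ≤ ∫ t in p..b, Q t := by
    simpa using intervalIntegral.integral_mono_on hpb intervalIntegrable_const (hint p b)
      fun t ht => hQ ht.1
  rw [← intervalIntegral.integral_add_adjacent_intervals (hint a p) (hint p b)]
  nlinarith [mul_le_mul_of_nonneg_left hleft (sub_nonneg.2 hpb),
    mul_le_mul_of_nonneg_left hright (sub_nonneg.2 hap)]

lemma map_compl_Icc_eq_zero {Ω : Type*} [MeasurableSpace Ω] {P : Measure Ω} {S : Ω → ℝ}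
    {c d : ℝ} (hS : AEMeasurable S P) (hSI : ∀ᵐ ω ∂P, S ω ∈ Icc c d) :
    P.map S (Icc c d)ᶜ = 0 := by
  rw [Measure.map_apply_of_aemeasurable hS measurableSet_Icc.compl]
  exact ae_iff.1 hSI

section LawOfS

variable {Ω : Type*} [MeasurableSpace Ω] {P : Measure Ω} [IsProbabilityMeasure P] {S : Ω → ℝ}
  {c d p : ℝ}

lemma VaR_eq_boundedQuantile (hS : AEMeasurable S P) (hSI : ∀ᵐ ω ∂P, S ω ∈ Icc c d)
    {α : ℝ} (hα : α ∈ Ioc 0 1) : VaR P S α = boundedQuantile (P.map S) c α := by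
  have := Measure.isProbabilityMeasure_map hS
  have hset : {x : ℝ | α ≤ (P {ω | S ω ≤ x}).toReal} = Ici (boundedQuantile (P.map S) c α) := by
    ext x
    rw [mem_ofPred_eq, mem_Ici, boundedQuantile_le_iff (map_compl_Icc_eq_zero hS hSI) hα,
      cdf_eq_real, measureReal_def, Measure.map_apply_of_aemeasurable hS measurableSet_Iic]
    rfl
  rw [VaR, hset, csInf_Ici]

lemma TVaR_eq_boundedQuantile (hS : AEMeasurable S P) (hSI : ∀ᵐ ω ∂P, S ω ∈ Icc c d)
    (hp : p ∈ Ioo 0 1) :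
    TVaR P S p = (1 - p)⁻¹ * ∫ α in p..1, boundedQuantile (P.map S) c α := by
  rw [TVaR, intervalIntegral.integral_congr fun α hα => ?_]
  rw [uIcc_of_le hp.2.le] at hα
  exact VaR_eq_boundedQuantile hS hSI ⟨hp.1.trans_le hα.1, hα.2⟩

lemma integral_le_TVaR (hS : AEMeasurable S P) (hSI : ∀ᵐ ω ∂P, S ω ∈ Icc c d)
    (hp : p ∈ Ioo 0 1) : ∫ ω, S ω ∂P ≤ TVaR P S p := by
  have := Measure.isProbabilityMeasure_map hS
  have hη := map_compl_Icc_eq_zero hS hSI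
  have hmean : ∫ ω, S ω ∂P = ∫ t in 0..1, boundedQuantile (P.map S) c t := by
    rw [← integral_id_eq_intervalIntegral_boundedQuantile hη,
      integral_map (f := fun x => x) hS aestronglyMeasurable_id]
  rw [TVaR_eq_boundedQuantile hS hSI hp, hmean, inv_mul_eq_div, le_div_iff₀ (by linarith [hp.2]),
    mul_comm]
  simpa using (monotone_boundedQuantile hη).mul_intervalIntegral_le_mul_intervalIntegral_of_le
    hp.1.le hp.2.le

lemma TVaR_le_of_ae_mem_Icc (hS : AEMeasurable S P) (hSI : ∀ᵐ ω ∂P, S ω ∈ Icc c d)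
    (hp : p ∈ Ioo 0 1) : TVaR P S p ≤ d := by
  have := Measure.isProbabilityMeasure_map hS
  have hη := map_compl_Icc_eq_zero hS hSI
  have h1p : 0 < 1 - p := by linarith [hp.2]
  have hle : ∫ α in p..1, boundedQuantile (P.map S) c α ≤ (1 - p) * d := by
    simpa using intervalIntegral.integral_mono_on hp.2.le
      (monotone_boundedQuantile hη).intervalIntegrable (intervalIntegrable_const (μ := volume))
      fun α _ => (boundedQuantile_mem_Icc hη α).2
  rw [TVaR_eq_boundedQuantile hS hSI hp, inv_mul_le_iff₀ h1p]
  exact hle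

end LawOfS

lemma aemeasurable_of_map_eq {Ω : Type*} [MeasurableSpace Ω] {P : Measure Ω} {ν : Measure ℝ}
    [IsProbabilityMeasure ν] {f : Ω → ℝ} (hf : P.map f = ν) : AEMeasurable f P :=
  .of_map_ne_zero (hf ▸ IsProbabilityMeasure.ne_zero ν)

section AdmissibleClass

variable {Ω : Type*} [MeasurableSpace Ω] {P : Measure Ω} {ν : Measure ℝ} [IsProbabilityMeasure ν]
  {n : ℕ} {X : Fin n → Ω → ℝ}

lemma ae_sum_mem_Icc_of_map_eq (hX : ∀ i, P.map (X i) = ν) {a b : ℝ} (hν : ν (Icc a b)ᶜ = 0) :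
    ∀ᵐ ω ∂P, ∑ i, X i ω ∈ Icc (n * a) (n * b) := by
  have hXI : ∀ i, ∀ᵐ ω ∂P, X i ω ∈ Icc a b := fun i =>
    ae_of_ae_map (aemeasurable_of_map_eq (hX i)) ((hX i).symm ▸ ae_iff.2 hν)
  filter_upwards [ae_all_iff.2 hXI] with ω hω
  exact ⟨by simpa using Finset.sum_le_sum (s := Finset.univ) fun i _ => (hω i).1,
    by simpa using Finset.sum_le_sum (s := Finset.univ) fun i _ => (hω i).2⟩

lemma integral_sum_of_map_eq (hX : ∀ i, P.map (X i) = ν) (hν : Integrable id ν) :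
    ∫ ω, ∑ i, X i ω ∂P = n * ∫ x, x ∂ν := by
  have hXi : ∀ i, ∫ ω, X i ω ∂P = ∫ x, x ∂ν := fun i => by
    rw [← hX i, integral_map (f := fun x => x) (aemeasurable_of_map_eq (hX i))
      aestronglyMeasurable_id]
  rw [integral_finsetSum _ fun i _ =>
    ((hX i).symm ▸ hν).comp_aemeasurable (aemeasurable_of_map_eq (hX i))]
  simp [hXi]

lemma mul_integral_le_TVaR_sum [IsProbabilityMeasure P] (hX : ∀ i, P.map (X i) = ν) {a b p : ℝ}
    (hν : ν (Icc a b)ᶜ = 0) (hp : p ∈ Ioo 0 1) :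
    n * ∫ x, x ∂ν ≤ TVaR P (fun ω => ∑ i, X i ω) p := by
  rw [← integral_sum_of_map_eq hX (.of_mem_Icc a b aemeasurable_id (ae_iff.2 hν))]
  exact integral_le_TVaR (Finset.aemeasurable_fun_sum _ fun i _ => aemeasurable_of_map_eq (hX i))
    (ae_sum_mem_Icc_of_map_eq hX hν) hp

end AdmissibleClass

lemma Function.Periodic.sum_range_add_mul {M : Type*} [AddCommGroup M] {g : ℝ → M} {n : ℕ}
    {δ : ℝ} (hg : Periodic g (n * δ)) :
    Periodic (fun x => ∑ i ∈ Finset.range n, g (x + i * δ)) δ := by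
  intro x
  have h := Finset.sum_range_succ (fun i : ℕ => g (x + i * δ)) n
  rw [Finset.sum_range_succ', Nat.cast_zero, zero_mul, add_zero, hg x] at h
  simp only [Nat.cast_add, Nat.cast_one, add_mul, one_mul] at h
  simpa only [add_assoc, add_comm δ, add_left_inj] using h

lemma Monotone.sum_range_add_mul_le_add {Q : ℝ → ℝ} (hQ : Monotone Q) {a b : ℝ}
    (hQab : ∀ t, Q t ∈ Icc a b) (n : ℕ) {δ v w : ℝ} (hvw : v ≤ w + δ) :
    ∑ i ∈ Finset.range n, Q (v + i * δ) ≤ ∑ i ∈ Finset.range n, Q (w + i * δ) + (b - a) := by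
  cases n with
  | zero => simpa using (hQab 0).1.trans (hQab 0).2
  | succ N =>
    rw [Finset.sum_range_succ, Finset.sum_range_succ']
    have hstep : ∑ i ∈ Finset.range N, Q (v + i * δ)
        ≤ ∑ i ∈ Finset.range N, Q (w + (i + 1 : ℕ) * δ) :=
      Finset.sum_le_sum fun i _ => hQ (by push_cast; linarith)
    linarith [(hQab (v + N * δ)).2, (hQab (w + (0 : ℕ) * δ)).1]

lemma sum_range_comp_fract_le_add {Q : ℝ → ℝ} (hQ : Monotone Q) {a b : ℝ}
    (hQab : ∀ t, Q t ∈ Icc a b) {n : ℕ} (hn : 0 < n) (x y : ℝ) :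
    ∑ i ∈ Finset.range n, Q (Int.fract (x + i * (n : ℝ)⁻¹))
      ≤ ∑ i ∈ Finset.range n, Q (Int.fract (y + i * (n : ℝ)⁻¹)) + (b - a) := by
  have hn' : (0 : ℝ) < n := Nat.cast_pos.2 hn
  have hper : Function.Periodic (fun x => ∑ i ∈ Finset.range n, Q (Int.fract (x + i * (n : ℝ)⁻¹)))
      (n : ℝ)⁻¹ :=
    Function.Periodic.sum_range_add_mul (g := Q ∘ Int.fract)
      (by rw [mul_inv_cancel₀ hn'.ne']; exact (Int.fract_periodic ℝ).comp Q)
  have hfract : ∀ v ∈ Ico 0 (n : ℝ)⁻¹,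
      ∑ i ∈ Finset.range n, Q (Int.fract (v + i * (n : ℝ)⁻¹))
        = ∑ i ∈ Finset.range n, Q (v + i * (n : ℝ)⁻¹) := by
    refine fun v hv => Finset.sum_congr rfl fun i hi => congrArg Q (Int.fract_eq_self.2 ⟨?_, ?_⟩)
    · have := hv.1; positivity
    · have hi' : (i : ℝ) + 1 ≤ n := by exact_mod_cast Finset.mem_range.1 hi
      calc v + i * (n : ℝ)⁻¹ < (i + 1) * (n : ℝ)⁻¹ := by linarith [hv.2]
        _ ≤ 1 := by rw [← div_eq_mul_inv, div_le_one hn']; exact hi'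
  obtain ⟨x', hx', hxx'⟩ := hper.exists_mem_Ico₀ (inv_pos.2 hn') x
  obtain ⟨y', hy', hyy'⟩ := hper.exists_mem_Ico₀ (inv_pos.2 hn') y
  rw [hxx', hyy', hfract x' hx', hfract y' hy']
  exact hQ.sum_range_add_mul_le_add hQab n (by linarith [hx'.2, hy'.1])

instance : IsProbabilityMeasure (volume : Measure UnitAddCircle) := ⟨UnitAddCircle.measure_univ⟩

lemma UnitAddCircle.measurable_equivIco :
    Measurable fun ω : UnitAddCircle => (AddCircle.equivIco 1 0 ω : ℝ) :=
  measurable_subtype_coe.comp (AddCircle.measurableEquivIco 1 0).measurable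

lemma UnitAddCircle.map_equivIco_volume :
    volume.map (fun ω : UnitAddCircle => (AddCircle.equivIco 1 0 ω : ℝ))
      = volume.restrict (Ioc 0 1) := by
  have hmk := (UnitAddCircle.measurePreserving_mk 0).map_eq
  rw [zero_add, ← Measure.restrict_congr_set Ico_ae_eq_Ioc] at hmk
  rw [← hmk, Measure.map_map UnitAddCircle.measurable_equivIco AddCircle.measurable_mk',
    ← Measure.restrict_congr_set Ico_ae_eq_Ioc]
  refine (Measure.map_congr (ae_restrict_of_forall_mem measurableSet_Ico fun x hx => ?_)).trans
    Measure.map_id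
  exact (AddCircle.coe_equivIco_mk_apply (p := (1 : ℝ)) x).trans
    (by simpa using Int.fract_eq_self.2 hx)

lemma map_boundedQuantile_equivIco_add {ν : Measure ℝ} [IsProbabilityMeasure ν] {a b : ℝ}
    (hν : ν (Icc a b)ᶜ = 0) (s : UnitAddCircle) :
    volume.map (fun ω => boundedQuantile ν a (AddCircle.equivIco 1 0 (ω + s))) = ν := by
  have hQ := (monotone_boundedQuantile hν).measurable
  change volume.map ((boundedQuantile ν a ∘
    fun ω : UnitAddCircle => (AddCircle.equivIco 1 0 ω : ℝ)) ∘ (· + s)) = ν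
  rw [← Measure.map_map (hQ.comp UnitAddCircle.measurable_equivIco) (measurable_add_const s),
    map_add_right_eq_self, ← Measure.map_map hQ UnitAddCircle.measurable_equivIco,
    UnitAddCircle.map_equivIco_volume, map_boundedQuantile hν]

lemma exists_mem_TVaRvals_le {ν : Measure ℝ} [IsProbabilityMeasure ν] {a b p : ℝ}
    (hν : ν (Icc a b)ᶜ = 0) (hp : p ∈ Ioo 0 1) {n : ℕ} (hn : 0 < n) :
    ∃ r ∈ TVaRvals ν n p, r ≤ n * ∫ x, x ∂ν + (b - a) := by
  set Q := boundedQuantile ν a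
  set X : Fin n → UnitAddCircle → ℝ :=
    fun i ω => Q (AddCircle.equivIco 1 0 (ω + ((i * (n : ℝ)⁻¹ : ℝ) : UnitAddCircle)))
  set S : UnitAddCircle → ℝ := fun ω => ∑ i, X i ω
  have hX : ∀ i, volume.map (X i) = ν := fun i => map_boundedQuantile_equivIco_add hν _
  have hSx : ∀ x : ℝ, S x = ∑ i ∈ Finset.range n, Q (Int.fract (x + i * (n : ℝ)⁻¹)) := by
    intro x
    rw [← Fin.sum_univ_eq_sum_range (fun i => Q (Int.fract (x + i * (n : ℝ)⁻¹)))]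
    refine Finset.sum_congr rfl fun i _ => ?_
    simp only [X, ← AddCircle.coe_add, AddCircle.coe_equivIco_mk_apply, div_one, mul_one]
  have hosc : ∀ ω ω', S ω ≤ S ω' + (b - a) := by
    intro ω ω'
    obtain ⟨x, rfl⟩ := QuotientAddGroup.mk_surjective ω
    obtain ⟨y, rfl⟩ := QuotientAddGroup.mk_surjective ω'
    rw [hSx, hSx]
    exact sum_range_comp_fract_le_add (monotone_boundedQuantile hν) (boundedQuantile_mem_Icc hν)
      hn x y
  have hSI := ae_sum_mem_Icc_of_map_eq hX hν
  have hSm : AEMeasurable S volume :=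
    Finset.aemeasurable_fun_sum _ fun i _ => aemeasurable_of_map_eq (hX i)
  have hle : ∀ ω, S ω ≤ n * ∫ x, x ∂ν + (b - a) := by
    intro ω
    rw [← integral_sum_of_map_eq hX (.of_mem_Icc a b aemeasurable_id (ae_iff.2 hν))]
    have := integral_mono (integrable_const (S ω - (b - a))) (.of_mem_Icc _ _ hSm hSI)
      fun ω' => show S ω - (b - a) ≤ S ω' by linarith [hosc ω ω']
    simp only [integral_const, probReal_univ, one_smul] at this
    linarith
  exact ⟨_, ⟨UnitAddCircle, _, volume, X, inferInstance, hX, rfl⟩,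
    TVaR_le_of_ae_mem_Icc hSm (hSI.mono fun ω h => ⟨h.1, hle ω⟩) hp⟩

theorem inf_TVaR_bounds_bounded_support_general
    (ν : Measure ℝ) [IsProbabilityMeasure ν] (a b μ : ℝ)
    (hsupp : ν (Icc a b)ᶜ = 0) (hμ : μ = ∫ x, x ∂ν)
    (p : ℝ) (hp : p ∈ Ioo (0:ℝ) 1) (n : ℕ) (hn : 0 < n) :
    (n : ℝ) * μ ≤ sInf (TVaRvals ν n p) ∧
    sInf (TVaRvals ν n p) ≤ (n : ℝ) * μ + (b - a) := by
  subst hμ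
  have hlower : ∀ r ∈ TVaRvals ν n p, n * ∫ x, x ∂ν ≤ r := by
    rintro _ ⟨Ω, _, P, X, _, hX, rfl⟩
    exact mul_integral_le_TVaR_sum hX hsupp hp
  obtain ⟨r, hr, hr_le⟩ := exists_mem_TVaRvals_le hsupp hp hn
  exact ⟨le_csInf ⟨r, hr⟩ hlower, (csInf_le ⟨_, hlower⟩ hr).trans hr_le⟩

/-- **Corollary 3.2 (a).** If `F` is a distribution on `[a,b]`, `a < b`, with mean `μ`,
then for `p ∈ (0,1)`, `nμ ≤ inf_{S ∈ 𝔖_n} TVaR_p(S) ≤ nμ + (b − a)`. -/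
theorem inf_TVaR_bounds_bounded_support
    (ν : Measure ℝ) [IsProbabilityMeasure ν] (a b μ : ℝ) (hab : a < b)
    (hsupp : ν (Icc a b)ᶜ = 0) (hμ : μ = ∫ x, x ∂ν)
    (p : ℝ) (hp : p ∈ Ioo (0:ℝ) 1) (n : ℕ) (hn : 0 < n) :
    (n : ℝ) * μ ≤ sInf (TVaRvals ν n p) ∧
    sInf (TVaRvals ν n p) ≤ (n : ℝ) * μ + (b - a) :=
  inf_TVaR_bounds_bounded_support_general ν a b μ hsupp hμ p hp n hn
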